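/- Let 𝓗 be a finite-dimensional complex inner-product space, H a positive semidefinite self-adjoint operator on 𝓗, and γ > 0 a constant such that ⟨φ', Hφ'⟩ ≥ γ‖φ'‖² for every φ' orthogonal to ker H. Let P be an orthogonal projection on 𝓗 and set G = ker H ∩ range P. Then for every φ ∈ 𝓗 orthogonal to G: (i) Pφ is orthogonal to G, so Pφ decomposes uniquely as Pφ = ψ + ψ' with ψ ∈ ker H ∩ G^⊥ and ψ' ∈ (ker H)^⊥; (ii) if Pφ ≠ 0 and ψ ≠ 0, then ⟨Pφ, H Pφ⟩/‖Pφ‖² ≥ γ (1 − ‖Pψ‖²/‖ψ‖²); (iii) if Pφ ≠ 0 and ψ = 0, then ⟨Pφ, H Pφ⟩/‖Pφ‖² ≥ γ. -/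

import Mathlib

/-!
Write `x = Pφ = ψ + ψ'` with `ψ ∈ ker T` and `ψ' ⊥ ker T`. Since `Tψ = 0` and `T` is symmetric,
`⟪x, Tx⟫ = ⟪ψ', Tψ'⟫ ≥ γ‖ψ'‖²`. Since `x ∈ range P` and `ψ ⊥ ψ'`,
`‖ψ‖² = ⟪ψ, x⟫ = ⟪Pψ, x⟫ ≤ ‖Pψ‖‖x‖`, and combined with `‖x‖² = ‖ψ‖² + ‖ψ'‖²` this gives
`(1 - ‖Pψ‖²/‖ψ‖²)‖x‖² ≤ ‖ψ'‖²`.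
-/

section

open LinearMap Submodule
open scoped InnerProductSpace

variable {𝕜 E : Type*} [RCLike 𝕜] [NormedAddCommGroup E] [InnerProductSpace 𝕜 E]

namespace LinearMap.IsSymmetricProjection

variable {p : E →ₗ[𝕜] E}

theorem inner_apply_left_of_mem_range (hp : p.IsSymmetricProjection) {x : E}
    (hx : x ∈ range p) (y : E) :
    ⟪p y, x⟫_𝕜 = ⟪y, x⟫_𝕜 := by
  rw [hp.isSymmetric, hp.isIdempotentElem.mem_range_iff.mp hx]

theorem apply_mem_orthogonal_of_le_range (hp : p.IsSymmetricProjection) {S : Submodule 𝕜 E}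
    (hS : S ≤ range p) {x : E} (hx : x ∈ Sᗮ) : p x ∈ Sᗮ := by
  rw [mem_orthogonal] at hx ⊢
  intro s hs
  rw [← hp.isSymmetric, hp.isIdempotentElem.mem_range_iff.mp (hS hs)]
  exact hx s hs

theorem one_sub_div_mul_norm_sq_le (hp : p.IsSymmetricProjection) {x ψ ψ' : E}
    (hx : x ∈ range p) (hψ : ψ ≠ 0) (hsum : x = ψ + ψ') (horth : ⟪ψ, ψ'⟫_𝕜 = 0) :
    (1 - ‖p ψ‖ ^ 2 / ‖ψ‖ ^ 2) * ‖x‖ ^ 2 ≤ ‖ψ'‖ ^ 2 := by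
  have hpyth : ‖x‖ ^ 2 = ‖ψ‖ ^ 2 + ‖ψ'‖ ^ 2 := by
    rw [hsum, sq, sq, sq, norm_add_sq_eq_norm_sq_add_norm_sq_of_inner_eq_zero _ _ horth]
  have hcs : ‖ψ‖ ^ 2 ≤ ‖p ψ‖ * ‖x‖ :=
    calc ‖ψ‖ ^ 2 = ‖⟪ψ, x⟫_𝕜‖ := by
          rw [hsum, inner_add_right, horth, add_zero, inner_self_eq_norm_sq_to_K]
          simp
      _ = ‖⟪p ψ, x⟫_𝕜‖ := by rw [hp.inner_apply_left_of_mem_range hx]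
      _ ≤ ‖p ψ‖ * ‖x‖ := norm_inner_le_norm _ _
  have hψpos : 0 < ‖ψ‖ ^ 2 := by positivity
  have hsq : ‖ψ‖ ^ 2 * ‖ψ‖ ^ 2 ≤ ‖p ψ‖ ^ 2 * ‖x‖ ^ 2 :=
    calc ‖ψ‖ ^ 2 * ‖ψ‖ ^ 2 ≤ (‖p ψ‖ * ‖x‖) * (‖p ψ‖ * ‖x‖) :=
          mul_self_le_mul_self hψpos.le hcs
      _ = ‖p ψ‖ ^ 2 * ‖x‖ ^ 2 := by ring
  rw [one_sub_div hψpos.ne', div_mul_eq_mul_div, div_le_iff₀ hψpos]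
  linear_combination hsq + ‖ψ‖ ^ 2 * hpyth

end LinearMap.IsSymmetricProjection

theorem LinearMap.IsSymmetric.inner_add_apply_add_of_mem_ker {T : E →ₗ[𝕜] E}
    (hT : T.IsSymmetric) {u : E} (hu : u ∈ ker T) (v : E) :
    ⟪u + v, T (u + v)⟫_𝕜 = ⟪v, T v⟫_𝕜 := by
  rw [mem_ker] at hu
  rw [map_add, hu, zero_add, inner_add_left, ← hT, hu, inner_zero_left, zero_add]

theorem Submodule.existsUnique_add_mem_orthogonal_of_le {K G : Submodule 𝕜 E}
    [K.HasOrthogonalProjection] (hGK : G ≤ K) {x : E} (hx : x ∈ Gᗮ) :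
    ∃! q : E × E, q.1 ∈ K ⊓ Gᗮ ∧ q.2 ∈ Kᗮ ∧ x = q.1 + q.2 := by
  have hx' : x - K.starProjection x ∈ Kᗮ := K.sub_starProjection_mem_orthogonal x
  refine ⟨(K.starProjection x, x - K.starProjection x), ⟨⟨?_, ?_⟩, hx', by simp⟩, ?_⟩
  · exact K.starProjection_apply_mem x
  · simpa using Gᗮ.sub_mem hx (orthogonal_le hGK hx')
  · rintro ⟨q₁, q₂⟩ ⟨⟨hq₁, -⟩, hq₂, rfl⟩
    have hproj : K.starProjection (q₁ + q₂) = q₁ :=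
      eq_starProjection_of_mem_orthogonal' hq₁ hq₂ rfl
    simp [hproj]

end

theorem stmt5 {V : Type*} [NormedAddCommGroup V] [InnerProductSpace ℂ V]
    [FiniteDimensional ℂ V]
    (T : V →ₗ[ℂ] V) (γ : ℝ) (hγ : 0 < γ)
    (hsa : ∀ u v : V, (inner ℂ (T u) v : ℂ) = inner ℂ u (T v))
    (hgap : ∀ φ' : V, φ' ∈ (LinearMap.ker T)ᗮ → γ * ‖φ'‖ ^ 2 ≤ (inner ℂ φ' (T φ') : ℂ).re)
    (P : V →ₗ[ℂ] V) (hP2 : P.comp P = P)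
    (hPsa : ∀ u v : V, (inner ℂ (P u) v : ℂ) = inner ℂ u (P v))
    (φ : V) (hφ : φ ∈ (LinearMap.ker T ⊓ LinearMap.range P)ᗮ) :
    (P φ ∈ (LinearMap.ker T ⊓ LinearMap.range P)ᗮ) ∧
    (∃! p : V × V,
        p.1 ∈ LinearMap.ker T ⊓ (LinearMap.ker T ⊓ LinearMap.range P)ᗮ ∧
        p.2 ∈ (LinearMap.ker T)ᗮ ∧ P φ = p.1 + p.2) ∧
    (∀ ψ ψ' : V,
        ψ ∈ LinearMap.ker T ⊓ (LinearMap.ker T ⊓ LinearMap.range P)ᗮ →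
        ψ' ∈ (LinearMap.ker T)ᗮ → P φ = ψ + ψ' →
        (P φ ≠ 0 → ψ ≠ 0 →
          γ * (1 - ‖P ψ‖ ^ 2 / ‖ψ‖ ^ 2) ≤ (inner ℂ (P φ) (T (P φ)) : ℂ).re / ‖P φ‖ ^ 2) ∧
        (P φ ≠ 0 → ψ = 0 →
          γ ≤ (inner ℂ (P φ) (T (P φ)) : ℂ).re / ‖P φ‖ ^ 2)) := by
  have hT : T.IsSymmetric := hsa
  have hP : P.IsSymmetricProjection := ⟨hP2, hPsa⟩
  have hPφ := hP.apply_mem_orthogonal_of_le_range inf_le_right hφ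
  refine ⟨hPφ, Submodule.existsUnique_add_mem_orthogonal_of_le inf_le_left hPφ,
    fun ψ ψ' hψ hψ' hsum => ?_⟩
  have henergy : γ * ‖ψ'‖ ^ 2 ≤ (inner ℂ (P φ) (T (P φ)) : ℂ).re := by
    rw [hsum, hT.inner_add_apply_add_of_mem_ker hψ.1]
    exact hgap ψ' hψ'
  refine ⟨fun hPφ0 hψ0 => ?_, fun hPφ0 hψ0 => ?_⟩
  · have hbound := hP.one_sub_div_mul_norm_sq_le (LinearMap.mem_range_self P φ) hψ0 hsum
      (Submodule.inner_right_of_mem_orthogonal hψ.1 hψ')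
    rw [le_div_iff₀ (by positivity), mul_assoc]
    exact (mul_le_mul_of_nonneg_left hbound hγ.le).trans henergy
  · rw [le_div_iff₀ (by positivity)]
    simpa [hsum, hψ0] using henergy
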